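/- For i = 1,2 let A_i = {(x,y) ∈ ℝ² : |x| ≤ γ_i/2, |y − m_i x| ≤ δ/2} with 0 < δ ≤ γ₂ ≤ γ₁ and slopes |m_i| ≤ K for a fixed constant K, and let α = |arctan m₁ − arctan m₂|. Then there is a constant C depending only on K such that |A₁ ∩ A₂| ≤ C · δ² γ₂ / (δ + γ₂ α). -/

import Mathlib

open MeasureTheory Set
open scoped ENNReal

/-
The intersection lies in the first parallelogram and, since on it the two centre lines
`y = m₁ x` and `y = m₂ x` stay within `δ` of each other, inside the band `|m₁ - m₂| |x| ≤ δ`.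
So it is contained in a parallelogram of slope `m₁`, thickness `δ` and length
`ℓ = min γ₂ (2δ / |m₁ - m₂|)`, whose area is `δ ℓ` because a shear preserves area.
Since `arctan` is `1`-Lipschitz, `α ≤ |m₁ - m₂|`, and `δ ℓ (δ + γ₂ α) ≤ δ² γ₂ + 2 δ² γ₂`.
-/

theorem Real.lipschitzWith_arctan : LipschitzWith 1 Real.arctan :=
  lipschitzWith_of_nnnorm_deriv_le Real.differentiable_arctan fun x => by
    rw [Real.deriv_arctan, ← NNReal.coe_le_coe, coe_nnnorm, Real.norm_eq_abs, NNReal.coe_one,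
      abs_of_pos (by positivity), div_le_one (by positivity)]
    nlinarith [sq_nonneg x]

theorem Real.abs_arctan_sub_arctan_le (x y : ℝ) :
    |Real.arctan x - Real.arctan y| ≤ |x - y| := by
  simpa [dist_eq_norm] using Real.lipschitzWith_arctan.dist_le_mul x y

def parallelogram (γ m δ : ℝ) : Set (ℝ × ℝ) :=
  {p | |p.1| ≤ γ / 2 ∧ |p.2 - m * p.1| ≤ δ / 2}

theorem measurePreserving_shear (m : ℝ) :
    MeasurePreserving (fun p : ℝ × ℝ => (p.1, p.2 - m * p.1)) := by
  refine (MeasurePreserving.id volume).skew_product (g := fun x y => y - m * x)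
    (by fun_prop) (ae_of_all _ fun x => ?_)
  exact (measurePreserving_sub_right volume (m * x)).map_eq

theorem parallelogram_eq_preimage_shear (γ m δ : ℝ) :
    parallelogram γ m δ = (fun p : ℝ × ℝ => (p.1, p.2 - m * p.1)) ⁻¹'
      (Icc (-(γ / 2)) (γ / 2) ×ˢ Icc (-(δ / 2)) (δ / 2)) := by
  ext p
  simp only [parallelogram, mem_ofPred_eq, mem_preimage, mem_prod, mem_Icc, abs_le]

theorem volume_parallelogram (γ m δ : ℝ) :
    volume (parallelogram γ m δ) = ENNReal.ofReal γ * ENNReal.ofReal δ := by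
  rw [parallelogram_eq_preimage_shear, (measurePreserving_shear m).measure_preimage
    (measurableSet_Icc.prod measurableSet_Icc).nullMeasurableSet, Measure.volume_eq_prod,
    Measure.prod_prod, Real.volume_Icc, Real.volume_Icc]
  ring_nf

theorem abs_sub_mul_abs_fst_le {γ₁ γ₂ m₁ m₂ δ : ℝ} {p : ℝ × ℝ}
    (h₁ : p ∈ parallelogram γ₁ m₁ δ) (h₂ : p ∈ parallelogram γ₂ m₂ δ) :
    |m₁ - m₂| * |p.1| ≤ δ := by
  rw [← abs_mul]
  calc |(m₁ - m₂) * p.1| = |(p.2 - m₂ * p.1) - (p.2 - m₁ * p.1)| := by ring_nf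
    _ ≤ |p.2 - m₂ * p.1| + |p.2 - m₁ * p.1| := abs_sub _ _
    _ ≤ δ / 2 + δ / 2 := add_le_add h₂.2 h₁.2
    _ = δ := add_halves δ

theorem exists_parallelogram_superset_inter (γ₁ m₁ m₂ : ℝ) {γ₂ δ : ℝ}
    (hγ₂ : 0 ≤ γ₂) (hδ : 0 ≤ δ) :
    ∃ ℓ, 0 ≤ ℓ ∧ ℓ ≤ γ₂ ∧ ℓ * |m₁ - m₂| ≤ 2 * δ ∧
      parallelogram γ₁ m₁ δ ∩ parallelogram γ₂ m₂ δ ⊆ parallelogram ℓ m₁ δ := by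
  rcases (abs_nonneg (m₁ - m₂)).eq_or_lt with hΔ | hΔ
  · refine ⟨γ₂, hγ₂, le_rfl, by rw [← hΔ]; linarith, fun p ⟨h₁, h₂⟩ => ⟨h₂.1, h₁.2⟩⟩
  refine ⟨min γ₂ (2 * δ / |m₁ - m₂|), by positivity, min_le_left _ _,
    (mul_le_mul_of_nonneg_right (min_le_right _ _) hΔ.le).trans (div_mul_cancel₀ _ hΔ.ne').le,
    fun p ⟨h₁, h₂⟩ => ⟨?_, h₁.2⟩⟩
  rw [← min_div_div_right zero_le_two]
  refine le_min h₂.1 ?_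
  rw [show 2 * δ / |m₁ - m₂| / 2 = δ / |m₁ - m₂| by ring, le_div_iff₀ hΔ, mul_comm]
  exact abs_sub_mul_abs_fst_le h₁ h₂

theorem mul_le_three_mul_sq_mul_div {δ γ ℓ α : ℝ} (hδ : 0 < δ) (hγ : 0 ≤ γ) (hα : 0 ≤ α)
    (hℓγ : ℓ ≤ γ) (hℓα : ℓ * α ≤ 2 * δ) :
    ℓ * δ ≤ 3 * δ ^ 2 * γ / (δ + γ * α) := by
  rw [le_div_iff₀ (by positivity)]
  nlinarith [mul_le_mul_of_nonneg_left hℓα (mul_nonneg hδ.le hγ),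
    mul_le_mul_of_nonneg_left hℓγ (sq_nonneg δ)]

theorem statement12 (K : ℝ) :
    ∃ C > 0, ∀ δ γ₁ γ₂ m₁ m₂ : ℝ, 0 < δ → δ ≤ γ₂ → γ₂ ≤ γ₁ →
      |m₁| ≤ K → |m₂| ≤ K →
      volume ({p : ℝ × ℝ | |p.1| ≤ γ₁ / 2 ∧ |p.2 - m₁ * p.1| ≤ δ / 2} ∩
              {p : ℝ × ℝ | |p.1| ≤ γ₂ / 2 ∧ |p.2 - m₂ * p.1| ≤ δ / 2}) ≤
        ENNReal.ofReal
          (C * δ ^ 2 * γ₂ / (δ + γ₂ * |Real.arctan m₁ - Real.arctan m₂|)) := by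
  refine ⟨3, by norm_num, fun δ γ₁ γ₂ m₁ m₂ hδ hδγ₂ _ _ _ => ?_⟩
  have hγ₂ : 0 ≤ γ₂ := hδ.le.trans hδγ₂
  obtain ⟨ℓ, hℓ, hℓγ₂, hℓΔ, hsub⟩ := exists_parallelogram_superset_inter γ₁ m₁ m₂ hγ₂ hδ.le
  have hℓα : ℓ * |Real.arctan m₁ - Real.arctan m₂| ≤ 2 * δ :=
    (mul_le_mul_of_nonneg_left (Real.abs_arctan_sub_arctan_le m₁ m₂) hℓ).trans hℓΔ
  calc volume (parallelogram γ₁ m₁ δ ∩ parallelogram γ₂ m₂ δ)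
      ≤ volume (parallelogram ℓ m₁ δ) := measure_mono hsub
    _ = ENNReal.ofReal (ℓ * δ) := by rw [volume_parallelogram, ENNReal.ofReal_mul hℓ]
    _ ≤ _ := ENNReal.ofReal_le_ofReal
      (mul_le_three_mul_sq_mul_div hδ hγ₂ (abs_nonneg _) hℓγ₂ hℓα)
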